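/- Let R > 0 and let y ∈ ℝ³ with 0 < ‖y‖ < R, and set ȳ = (R²/‖y‖²) y. Then for every x ∈ ℝ³ with ‖x‖ ≤ R one has R² − ⟨x, y⟩ + ‖y‖·‖x − ȳ‖ ≥ 2R(R − ‖y‖) > 0. In particular the argument of the logarithm in the regular part of the Neumann function of the ball is strictly positive on the closed ball. -/

import Mathlib

/-!
Cauchy–Schwarz against `y` gives `‖y‖ ‖x − ȳ‖ ≥ ⟨ȳ − x, y⟩ = R² − ⟨x, y⟩`, so the argument
of the logarithm is at least `2 (R² − ⟨x, y⟩)`; a second Cauchy–Schwarz with `‖x‖ ≤ R` bounds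
`⟨x, y⟩` by `R ‖y‖`.
-/

open Real
open scoped RealInnerProductSpace

section InversionPoint

variable {E : Type*} [NormedAddCommGroup E] [InnerProductSpace ℝ E]

theorem inner_div_norm_sq_smul_self {y : E} (hy : y ≠ 0) (a : ℝ) :
    ⟪(a / ‖y‖ ^ 2) • y, y⟫ = a := by
  have : ‖y‖ ^ 2 ≠ 0 := by positivity
  rw [real_inner_smul_left, real_inner_self_eq_norm_sq, div_mul_cancel₀ _ this]

theorem sub_inner_le_norm_mul_norm_sub_div_norm_sq_smul {y : E} (hy : y ≠ 0) (x : E) (a : ℝ) :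
    a - ⟪x, y⟫ ≤ ‖y‖ * ‖x - (a / ‖y‖ ^ 2) • y‖ :=
  calc a - ⟪x, y⟫ = ⟪(a / ‖y‖ ^ 2) • y - x, y⟫ := by
        rw [inner_sub_left, inner_div_norm_sq_smul_self hy]
    _ ≤ ‖(a / ‖y‖ ^ 2) • y - x‖ * ‖y‖ := real_inner_le_norm _ _
    _ = ‖y‖ * ‖x - (a / ‖y‖ ^ 2) • y‖ := by rw [norm_sub_rev, mul_comm]

end InversionPoint

theorem log_argument_positive (R : ℝ)
    (y : EuclideanSpace ℝ (Fin 3)) (hy0 : 0 < ‖y‖) (hyR : ‖y‖ < R)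
    (x : EuclideanSpace ℝ (Fin 3)) (hx : ‖x‖ ≤ R) :
    2 * R * (R - ‖y‖) ≤ R ^ 2 - ⟪x, y⟫ + ‖y‖ * ‖x - (R ^ 2 / ‖y‖ ^ 2) • y‖ ∧
      0 < 2 * R * (R - ‖y‖) := by
  have hinv := sub_inner_le_norm_mul_norm_sub_div_norm_sq_smul (norm_pos_iff.mp hy0) x (R ^ 2)
  have hxy : ⟪x, y⟫ ≤ R * ‖y‖ :=
    (real_inner_le_norm x y).trans (mul_le_mul_of_nonneg_right hx (norm_nonneg y))
  refine ⟨by linarith, ?_⟩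
  have hR : 0 < R := hy0.trans hyR
  have : 0 < R - ‖y‖ := sub_pos.mpr hyR
  positivity
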